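/- arXiv:1901.08085 — 2 statements merged into one kernel-verified Lean document; each statement's English description precedes it below -/
import Mathlib

section
/- Let σ₂, r, h₂, K, k be strictly positive real numbers with h₂ − r·k > 0, and set λ := √(2r)/σ₂. Then there exist real numbers c₁ with −h₂/(r·λ) < c₁ < 0 and 0 < U < u such that, defining w(s) := (h₂/r)·s + c₁·exp(λs) + (c₁ + h₂/(r·λ))·exp(−λs), the following hold: w′(U) = k, w′(u) = k, and w(u) = w(U) + K + k·(u − U). -/
/-!
Write `m = h₂/r` and choose `c₁ = -(m/λ)/(1 + e^{2t})` for a parameter `t`. Then the payoff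
becomes `w(s) = (m/λ) (λs - sinh (λs - t) / cosh t)`, so `w'(s) = m (1 - cosh (λs - t) / cosh t)`
is symmetric about `λs = t`. Taking `λU = t - d` and `λu = t + d`, both smooth-fit conditions reduce
to `m cosh d = (m - k) cosh t`, and value matching to `2 (m - k) (d - tanh d) = λK`.
Since `d - tanh d` is continuous, vanishes at `0` and exceeds `d - 1`, the intermediate value
theorem gives `d > 0`, and then `t = arcosh (m cosh d / (m - k)) > d`.
-/

open Real Set

lemma exists_pos_sub_tanh_eq {v : ℝ} (hv : 0 < v) : ∃ d, 0 < d ∧ d - tanh d = v := by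
  have hcont : Continuous fun d => d - tanh d := by
    simp only [tanh_eq_sinh_div_cosh]
    exact continuous_id.sub (continuous_sinh.div continuous_cosh fun x => (cosh_pos x).ne')
  have hv_mem : v ∈ Icc (0 - tanh 0) ((v + 1) - tanh (v + 1)) :=
    ⟨by simp [hv.le], by linarith [tanh_lt_one (v + 1)]⟩
  obtain ⟨d, ⟨hd0, -⟩, hd⟩ := intermediate_value_Icc (by linarith) hcont.continuousOn hv_mem
  refine ⟨d, lt_of_le_of_ne hd0 ?_, hd⟩
  rintro rfl
  simp [hv.ne] at hd

lemma exists_lt_cosh_eq_mul_cosh {a d : ℝ} (ha : 1 < a) (hd : 0 ≤ d) :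
    ∃ t, d < t ∧ cosh t = a * cosh d := by
  have hcosh : cosh d < a * cosh d := lt_mul_left (cosh_pos d) ha
  have hone : 1 ≤ a * cosh d := (one_le_cosh d).trans hcosh.le
  refine ⟨arcosh (a * cosh d), ?_, cosh_arcosh hone⟩
  have := hcosh.trans_eq (cosh_arcosh hone).symm
  rwa [cosh_lt_cosh, abs_of_nonneg hd, abs_of_nonneg (arcosh_nonneg hone)] at this

noncomputable def dictatorPayoff (m lam t s : ℝ) : ℝ :=
  m / lam * (lam * s - sinh (lam * s - t) / cosh t)

section Payoff

variable {m lam t : ℝ}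

lemma dictatorPayoff_eq (hlam : lam ≠ 0) (s : ℝ) :
    m * s + -(m / lam) / (1 + exp (2 * t)) * exp (lam * s)
        + (-(m / lam) / (1 + exp (2 * t)) + m / lam) * exp (-lam * s)
      = dictatorPayoff m lam t s := by
  simp only [dictatorPayoff, sinh_eq, cosh_eq, neg_mul, neg_sub, exp_sub, exp_neg, two_mul,
    exp_add]
  field_simp
  ring

lemma hasDerivAt_dictatorPayoff (hlam : lam ≠ 0) (s : ℝ) :
    HasDerivAt (dictatorPayoff m lam t) (m * (1 - cosh (lam * s - t) / cosh t)) s := by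
  have hinner : HasDerivAt (fun s => lam * s - t) lam s := by
    simpa using ((hasDerivAt_id s).const_mul lam).sub_const t
  have := (((hasDerivAt_id s).const_mul lam).sub
    ((hinner.sinh).div_const (cosh t))).const_mul (m / lam)
  exact this.congr_deriv (by field_simp)

lemma dictatorPayoff_at_shift (hlam : lam ≠ 0) (x : ℝ) :
    dictatorPayoff m lam t ((t + x) / lam) = m / lam * (t + x - sinh x / cosh t) := by
  simp only [dictatorPayoff, mul_div_cancel₀ _ hlam, add_sub_cancel_left]

lemma deriv_dictatorPayoff_at_shift (hlam : lam ≠ 0) (x : ℝ) :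
    deriv (dictatorPayoff m lam t) ((t + x) / lam) = m * (1 - cosh x / cosh t) := by
  rw [(hasDerivAt_dictatorPayoff hlam _).deriv, mul_div_cancel₀ _ hlam, add_sub_cancel_left]

end Payoff

theorem dictator_NE_thresholds_exist_general
    (σ₂ r h₂ K k : ℝ)
    (hσ₂ : 0 < σ₂) (hr : 0 < r) (hK : 0 < K) (hk : 0 < k)
    (hkey : 0 < h₂ - r * k) :
    ∃ c₁ U u : ℝ,
      -(h₂ / (r * (Real.sqrt (2 * r) / σ₂))) < c₁ ∧ c₁ < 0 ∧ 0 < U ∧ U < u ∧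
      (let lam : ℝ := Real.sqrt (2 * r) / σ₂
       let w : ℝ → ℝ := fun s =>
         h₂ / r * s + c₁ * Real.exp (lam * s)
           + (c₁ + h₂ / (r * lam)) * Real.exp (-lam * s)
       deriv w U = k ∧ deriv w u = k ∧ w u = w U + K + k * (u - U)) := by
  set lam := √(2 * r) / σ₂
  have hlam : 0 < lam := by positivity
  set m := h₂ / r
  have hkm : 0 < m - k := by rw [sub_pos, lt_div_iff₀ hr]; linarith
  have hm : 0 < m := by linarith
  obtain ⟨d, hd, hdK⟩ := exists_pos_sub_tanh_eq (v := lam * K / (2 * (m - k))) (by positivity)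
  obtain ⟨t, hdt, hcosh⟩ :=
    exists_lt_cosh_eq_mul_cosh (a := m / (m - k)) ((one_lt_div hkm).2 (by linarith)) hd.le
  have hexp : 1 < 1 + exp (2 * t) := by linarith [exp_pos (2 * t)]
  refine ⟨-(m / lam) / (1 + exp (2 * t)), (t + -d) / lam, (t + d) / lam, ?_, ?_, ?_, ?_, ?_⟩
  · rw [← div_div, neg_div, neg_lt_neg_iff]
    exact div_lt_self (by positivity) hexp
  · exact div_neg_of_neg_of_pos (neg_neg_of_pos (by positivity)) (by positivity)
  · exact div_pos (by linarith) hlam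
  · exact div_lt_div_of_pos_right (by linarith) hlam
  intro lam' w
  have hw : w = dictatorPayoff m lam t := by
    funext s
    rw [← dictatorPayoff_eq hlam.ne']
    simp only [w, lam', m, div_div]
  rw [hw, deriv_dictatorPayoff_at_shift hlam.ne', deriv_dictatorPayoff_at_shift hlam.ne',
    dictatorPayoff_at_shift hlam.ne', dictatorPayoff_at_shift hlam.ne', cosh_neg, sinh_neg, hcosh]
  rw [tanh_eq_sinh_div_cosh] at hdK
  field_simp at hdK ⊢
  refine ⟨by ring, by ring, by linear_combination hdK⟩

/-- Existence of the thresholds (c₁, U, u) for the 'dictator' Nash equilibrium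
of the two-player cash management game (eq. NE-2). -/
theorem dictator_NE_thresholds_exist
    (σ₂ r h₂ K k : ℝ)
    (hσ₂ : 0 < σ₂) (hr : 0 < r) (hh₂ : 0 < h₂) (hK : 0 < K) (hk : 0 < k)
    (hkey : 0 < h₂ - r * k) :
    ∃ c₁ U u : ℝ,
      -(h₂ / (r * (Real.sqrt (2 * r) / σ₂))) < c₁ ∧ c₁ < 0 ∧ 0 < U ∧ U < u ∧
      (let lam : ℝ := Real.sqrt (2 * r) / σ₂
       let w : ℝ → ℝ := fun s =>
         h₂ / r * s + c₁ * Real.exp (lam * s)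
           + (c₁ + h₂ / (r * lam)) * Real.exp (-lam * s)
       deriv w U = k ∧ deriv w u = k ∧ w u = w U + K + k * (u - U)) :=
  dictator_NE_thresholds_exist_general σ₂ r h₂ K k hσ₂ hr hK hk hkey
end

section
/- Let σ₂, r, h₂, u be strictly positive real numbers, set λ := √(2r)/σ₂, and let c₁, c₂ be real numbers. Define w : ℝ → ℝ by w(s) := (h₂/r)·s + c₁·exp(λs) + c₂·exp(−λs) for s ≥ 0 and w(s) := −(h₂/r)·s + (c₁ + h₂/(r·λ))·exp(λs) + (c₂ − h₂/(r·λ))·exp(−λs) for s < 0. Then: (i) w is differentiable on (−u, u) (in particular the two branches match in value and first derivative at s = 0); and (ii) for every s ∈ (−u, u) with s ≠ 0, w is twice differentiable at s and (σ₂²/2)·w″(s) − r·w(s) + h₂·|s| = 0. -/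
/-!
On each side of `0` the candidate is `k s + A e^{λs} + B e^{-λs}` with `k = ± h₂/r`: the linear
part is a particular solution of `(σ₂²/2) w'' - r w + h₂ |s| = 0`, and `e^{±λs}` solve the
homogeneous equation because `(σ₂²/2) λ² = r`. Passing from `s ≥ 0` to `s < 0` flips the slope
`k` to `-k` and shifts `A, B` by `± k/λ`, which leaves the value at `0` unchanged and
compensates the jump `2k` of the slope by `λ (k/λ + k/λ)`, so the two branches fit in a `C¹` way.
-/

open Topology

noncomputable def expBranch (k A B lam : ℝ) (s : ℝ) : ℝ :=
  k * s + A * Real.exp (lam * s) + B * Real.exp (-lam * s)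

section ExpBranch

variable (k A B lam : ℝ)

lemma hasDerivAt_const_mul_exp_mul (c x : ℝ) :
    HasDerivAt (fun s => c * Real.exp (lam * s)) (lam * (c * Real.exp (lam * x))) x := by
  have h := (((hasDerivAt_id x).const_mul lam).exp).const_mul c
  simp only [id, mul_one] at h
  exact h.congr_deriv (by ring)

lemma hasDerivAt_expBranch (x : ℝ) :
    HasDerivAt (expBranch k A B lam)
      (k + lam * (A * Real.exp (lam * x)) - lam * (B * Real.exp (-lam * x))) x := by
  have h := (((hasDerivAt_id x).const_mul k).add (hasDerivAt_const_mul_exp_mul lam A x)).add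
    (hasDerivAt_const_mul_exp_mul (-lam) B x)
  exact h.congr_deriv (by ring)

lemma differentiable_expBranch : Differentiable ℝ (expBranch k A B lam) :=
  fun x => (hasDerivAt_expBranch k A B lam x).differentiableAt

lemma deriv_expBranch :
    deriv (expBranch k A B lam)
      = fun x => k + lam * (A * Real.exp (lam * x)) - lam * (B * Real.exp (-lam * x)) :=
  funext fun x => (hasDerivAt_expBranch k A B lam x).deriv

lemma hasDerivAt_deriv_expBranch (x : ℝ) :
    HasDerivAt (deriv (expBranch k A B lam))
      (lam ^ 2 * (A * Real.exp (lam * x) + B * Real.exp (-lam * x))) x := by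
  rw [deriv_expBranch]
  have h := ((hasDerivAt_const x k).add ((hasDerivAt_const_mul_exp_mul lam A x).const_mul lam)).sub
    ((hasDerivAt_const_mul_exp_mul (-lam) B x).const_mul lam)
  exact h.congr_deriv (by ring)

lemma expBranch_smooth_fit (hlam : lam ≠ 0) :
    expBranch k A B lam 0 = expBranch (-k) (A + k / lam) (B - k / lam) lam 0 ∧
      deriv (expBranch k A B lam) 0
        = deriv (expBranch (-k) (A + k / lam) (B - k / lam) lam) 0 := by
  simp only [expBranch, deriv_expBranch, mul_zero, Real.exp_zero]
  constructor
  · ring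
  · field_simp
    ring

lemma expBranch_ode {σ r : ℝ} (hlam : σ ^ 2 / 2 * lam ^ 2 = r) (s : ℝ) :
    σ ^ 2 / 2 * deriv (deriv (expBranch k A B lam)) s - r * expBranch k A B lam s + r * k * s
      = 0 := by
  rw [(hasDerivAt_deriv_expBranch k A B lam s).deriv, expBranch]
  linear_combination (A * Real.exp (lam * s) + B * Real.exp (-lam * s)) * hlam

end ExpBranch

section Piecewise

variable {f g : ℝ → ℝ} {a s : ℝ}

lemma ite_le_eventuallyEq_of_lt (h : a < s) :
    (fun x => if a ≤ x then f x else g x) =ᶠ[𝓝 s] f := by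
  filter_upwards [lt_mem_nhds h] with x hx
  exact if_pos hx.le

lemma ite_le_eventuallyEq_of_gt (h : s < a) :
    (fun x => if a ≤ x then f x else g x) =ᶠ[𝓝 s] g := by
  filter_upwards [gt_mem_nhds h] with x hx
  exact if_neg (not_le.mpr hx)

lemma differentiable_ite_le (hf : Differentiable ℝ f) (hg : Differentiable ℝ g)
    (h₀ : f a = g a) (h₁ : deriv f a = deriv g a) :
    Differentiable ℝ (fun x => if a ≤ x then f x else g x) := by
  intro s
  rcases lt_trichotomy s a with hs | rfl | hs
  · exact (ite_le_eventuallyEq_of_gt hs).differentiableAt_iff.mpr (hg s)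
  · have hright : HasDerivWithinAt (fun x => if s ≤ x then f x else g x) (deriv f s)
        (Set.Ici s) s :=
      (hf s).hasDerivAt.hasDerivWithinAt.congr (fun x hx => if_pos hx) (if_pos le_rfl)
    have hleft : HasDerivWithinAt (fun x => if s ≤ x then f x else g x) (deriv f s)
        (Set.Iic s) s := by
      refine (h₁ ▸ (hg s).hasDerivAt).hasDerivWithinAt.congr (fun x hx => ?_) (by simp [h₀])
      rcases (Set.mem_Iic.mp hx).eq_or_lt with rfl | hlt
      · simp [h₀]
      · exact if_neg (not_le.mpr hlt)
    have h := hleft.union hright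
    rw [Set.Iic_union_Ici, hasDerivWithinAt_univ] at h
    exact h.differentiableAt
  · exact (ite_le_eventuallyEq_of_lt hs).differentiableAt_iff.mpr (hf s)

end Piecewise

lemma Filter.EventuallyEq.expBranch_ode {w : ℝ → ℝ} {k A B lam σ r s : ℝ}
    (hw : w =ᶠ[𝓝 s] expBranch k A B lam) (hlam : σ ^ 2 / 2 * lam ^ 2 = r) :
    DifferentiableAt ℝ (deriv w) s ∧ σ ^ 2 / 2 * deriv (deriv w) s - r * w s + r * k * s = 0 := by
  have hdw := hw.deriv
  refine ⟨hdw.differentiableAt_iff.mpr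
    (hasDerivAt_deriv_expBranch k A B lam s).differentiableAt, ?_⟩
  rw [hdw.deriv_eq, hw.eq_of_nhds]
  exact _root_.expBranch_ode k A B lam hlam s

theorem two_player_candidate_solves_HJB_general
    (σ₂ r h₂ u : ℝ) (hσ₂ : 0 < σ₂) (hr : 0 < r)
    (c₁ c₂ : ℝ) :
    let lam : ℝ := Real.sqrt (2 * r) / σ₂
    let w : ℝ → ℝ := fun s =>
      if 0 ≤ s then
        h₂ / r * s + c₁ * Real.exp (lam * s) + c₂ * Real.exp (-lam * s)
      else
        -(h₂ / r) * s + (c₁ + h₂ / (r * lam)) * Real.exp (lam * s)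
          + (c₂ - h₂ / (r * lam)) * Real.exp (-lam * s)
    (∀ s ∈ Set.Ioo (-u) u, DifferentiableAt ℝ w s) ∧
    (∀ s ∈ Set.Ioo (-u) u, s ≠ 0 →
      DifferentiableAt ℝ (deriv w) s ∧
        σ₂ ^ 2 / 2 * deriv (deriv w) s - r * w s + h₂ * |s| = 0) := by
  intro lam w
  have hlam : lam ≠ 0 := (div_pos (Real.sqrt_pos.mpr (by positivity)) hσ₂).ne'
  have hlam_sq : σ₂ ^ 2 / 2 * lam ^ 2 = r := by
    simp only [lam, div_pow, Real.sq_sqrt (by positivity : (0 : ℝ) ≤ 2 * r)]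
    field_simp
  have hw : w = fun s => if 0 ≤ s then expBranch (h₂ / r) c₁ c₂ lam s
      else expBranch (-(h₂ / r)) (c₁ + h₂ / r / lam) (c₂ - h₂ / r / lam) lam s := by
    simp only [w, expBranch, div_div]
  have hslope : r * (h₂ / r) = h₂ := mul_div_cancel₀ h₂ hr.ne'
  obtain ⟨hfit₀, hfit₁⟩ := expBranch_smooth_fit (h₂ / r) c₁ c₂ lam hlam
  rw [hw]
  refine ⟨fun s _ => differentiable_ite_le (differentiable_expBranch _ _ _ _)
    (differentiable_expBranch _ _ _ _) hfit₀ hfit₁ s, fun s _ hs => ?_⟩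
  rcases hs.lt_or_gt with hneg | hpos
  · obtain ⟨hdiff, hode⟩ := (ite_le_eventuallyEq_of_gt hneg).expBranch_ode hlam_sq
    refine ⟨hdiff, ?_⟩
    rw [abs_of_neg hneg]
    linear_combination hode + s * hslope
  · obtain ⟨hdiff, hode⟩ := (ite_le_eventuallyEq_of_lt hpos).expBranch_ode hlam_sq
    refine ⟨hdiff, ?_⟩
    rw [abs_of_pos hpos]
    linear_combination hode - s * hslope

/-- The explicit candidate payoff of the two-player cash management game is C¹
across s = 0 and solves the HJB ODE (σ₂²/2)w″ − rw + h₂|s| = 0 in the waiting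
region away from s = 0. -/
theorem two_player_candidate_solves_HJB
    (σ₂ r h₂ u : ℝ) (hσ₂ : 0 < σ₂) (hr : 0 < r) (hh₂ : 0 < h₂) (hu : 0 < u)
    (c₁ c₂ : ℝ) :
    let lam : ℝ := Real.sqrt (2 * r) / σ₂
    let w : ℝ → ℝ := fun s =>
      if 0 ≤ s then
        h₂ / r * s + c₁ * Real.exp (lam * s) + c₂ * Real.exp (-lam * s)
      else
        -(h₂ / r) * s + (c₁ + h₂ / (r * lam)) * Real.exp (lam * s)
          + (c₂ - h₂ / (r * lam)) * Real.exp (-lam * s)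
    (∀ s ∈ Set.Ioo (-u) u, DifferentiableAt ℝ w s) ∧
    (∀ s ∈ Set.Ioo (-u) u, s ≠ 0 →
      DifferentiableAt ℝ (deriv w) s ∧
        σ₂ ^ 2 / 2 * deriv (deriv w) s - r * w s + h₂ * |s| = 0) :=
  two_player_candidate_solves_HJB_general σ₂ r h₂ u hσ₂ hr c₁ c₂
end
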